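/- Let N be a positive integer and μ, ε > 0 real. Let D₁, D₂, D₃ be pairwise commuting skew-symmetric real N×N matrices, 𝔻 := [[0, −D₃, D₂], [D₃, 0, −D₁], [−D₂, D₁, 0]] (3N×3N), and 𝒟 := (1/√(με))·[[0, −𝔻], [𝔻, 0]] (6N×6N). Let J be the 6N×6N block matrix [[0, I_{3N}], [−I_{3N}, 0]]. Then for every real t, exp(t𝒟)ᵀ · J · exp(t𝒟) = J. Equivalently, if two pairs (H^t, E^t) and (H̄^t, Ē^t) are both propagated by (√μ·H^t, √ε·E^t) = exp(t𝒟)·(√μ·H⁰, √ε·E⁰), then ⟨H^t, Ē^t⟩ − ⟨E^t, H̄^t⟩ = ⟨H⁰, Ē⁰⟩ − ⟨E⁰, H̄⁰⟩ for all t. -/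

import Mathlib

open Matrix

/-- A `3N × 3N` block matrix built from a `3 × 3` array of `N × N` blocks. -/
def blockMat3 {N : ℕ} {α : Type*} (A : Fin 3 → Fin 3 → Matrix (Fin N) (Fin N) α) :
    Matrix (Fin 3 × Fin N) (Fin 3 × Fin N) α :=
  Matrix.of fun p q => A p.1 q.1 p.2 q.2

/-- The `3N × 3N` block-diagonal matrix with each diagonal block equal to `D`. -/
def blockDiag3 {N : ℕ} {α : Type*} [Zero α] (D : Matrix (Fin N) (Fin N) α) :
    Matrix (Fin 3 × Fin N) (Fin 3 × Fin N) α :=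
  Matrix.of fun p q => if p.1 = q.1 then D p.2 q.2 else 0

/-!
The generator `𝒟` is skew-symmetric (the discrete curl `𝔻` is symmetric because each `Dᵢ` is
skew) and commutes with `J`. Hence `exp(t𝒟)ᵀ = exp(-t𝒟)` commutes with `J`, and
`exp(t𝒟)ᵀ J exp(t𝒟) = J exp(-t𝒟) exp(t𝒟) = J`. The conserved quantity is the bilinear form
`⟨u, J v⟩` evaluated on the scaled field pairs, which equals `√(με)(⟨H, Ē⟩ - ⟨E, H̄⟩)`.
-/

lemma blockMat3_transpose {N : ℕ} {α : Type*} (A : Fin 3 → Fin 3 → Matrix (Fin N) (Fin N) α) :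
    (blockMat3 A)ᵀ = blockMat3 fun i j => (A j i)ᵀ :=
  rfl

lemma blockMat3_curl_transpose {N : ℕ} {α : Type*} [AddGroup α]
    {D1 D2 D3 : Matrix (Fin N) (Fin N) α} (hD1 : D1ᵀ = -D1) (hD2 : D2ᵀ = -D2) (hD3 : D3ᵀ = -D3) :
    (blockMat3 ![![0, -D3, D2], ![D3, 0, -D1], ![-D2, D1, 0]])ᵀ =
      blockMat3 ![![0, -D3, D2], ![D3, 0, -D1], ![-D2, D1, 0]] := by
  rw [blockMat3_transpose]
  congr 1
  funext i j
  fin_cases i <;> fin_cases j <;> simp [hD1, hD2, hD3]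

section Blocks

variable {n : Type*} {α : Type*}

lemma fromBlocks_zero_neg_transpose [AddGroup α] {B : Matrix n n α} (hB : Bᵀ = B) :
    (fromBlocks 0 (-B) B 0)ᵀ = -fromBlocks 0 (-B) B 0 := by
  simp [fromBlocks_transpose, fromBlocks_neg, hB]

variable [Fintype n] [DecidableEq n] [Ring α]

lemma commute_fromBlocks_zero_one_neg_one (B : Matrix n n α) :
    Commute (fromBlocks 0 1 (-1) 0) (fromBlocks 0 (-B) B 0) := by
  simp [Commute, SemiconjBy, fromBlocks_multiply]

lemma sumElim_dotProduct_fromBlocks_zero_one_neg_one_mulVec (a b c d : n → α) :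
    Sum.elim a b ⬝ᵥ fromBlocks 0 1 (-1) 0 *ᵥ Sum.elim c d = a ⬝ᵥ d - b ⬝ᵥ c := by
  simp [fromBlocks_mulVec, sumElim_dotProduct_sumElim, neg_mulVec, sub_eq_add_neg]

end Blocks

section Symplectic

variable {n : Type*} [Fintype n]

lemma dotProduct_mulVec_mulVec_of_transpose_mul_mul {R : Type*} [CommSemiring R]
    {M J : Matrix n n R} (h : Mᵀ * J * M = J) (u v : n → R) : M *ᵥ u ⬝ᵥ J *ᵥ (M *ᵥ v) = u ⬝ᵥ J *ᵥ v := by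
  rw [mulVec_mulVec, dotProduct_mulVec, ← vecMul_transpose, vecMul_vecMul, ← mul_assoc, h,
    ← dotProduct_mulVec]

lemma exp_transpose_mul_mul_exp_of_commute [DecidableEq n] {𝔸 : Type*} [NormedCommRing 𝔸]
    [NormedAlgebra ℚ 𝔸] [CompleteSpace 𝔸] {A J : Matrix n n 𝔸} (hA : Aᵀ = -A)
    (hJ : Commute J A) : (NormedSpace.exp A)ᵀ * J * NormedSpace.exp A = J := by
  calc (NormedSpace.exp A)ᵀ * J * NormedSpace.exp A
      = NormedSpace.exp (-A) * J * NormedSpace.exp A := by rw [← exp_transpose, hA]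
    _ = J * (NormedSpace.exp (-A) * NormedSpace.exp A) := by
        rw [← (hJ.neg_right.exp_right).eq, mul_assoc]
    _ = J := by
        rw [← exp_add_of_commute _ _ (Commute.neg_left (Commute.refl A)), neg_add_cancel,
          NormedSpace.exp_zero, mul_one]

end Symplectic

theorem discrete_symplecticity_conservation_general {N : ℕ} (μ ε : ℝ) (hμ : 0 < μ) (hε : 0 < ε)
    (D1 D2 D3 : Matrix (Fin N) (Fin N) ℝ)
    (hD1 : D1ᵀ = -D1) (hD2 : D2ᵀ = -D2) (hD3 : D3ᵀ = -D3)
    (𝔻 : Matrix (Fin 3 × Fin N) (Fin 3 × Fin N) ℝ)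
    (h𝔻 : 𝔻 = blockMat3 ![![0, -D3, D2], ![D3, 0, -D1], ![-D2, D1, 0]])
    (𝒟 : Matrix ((Fin 3 × Fin N) ⊕ (Fin 3 × Fin N)) ((Fin 3 × Fin N) ⊕ (Fin 3 × Fin N)) ℝ)
    (h𝒟 : 𝒟 = (Real.sqrt (μ * ε))⁻¹ • Matrix.fromBlocks 0 (-𝔻) 𝔻 0)
    (H E : ℝ → (Fin 3 × Fin N → ℝ))
    (hprop : ∀ t : ℝ,
      Sum.elim (fun i => Real.sqrt μ * H t i) (fun i => Real.sqrt ε * E t i) =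
        (NormedSpace.exp (t • 𝒟)).mulVec
          (Sum.elim (fun i => Real.sqrt μ * H 0 i) (fun i => Real.sqrt ε * E 0 i)))
    (J : Matrix ((Fin 3 × Fin N) ⊕ (Fin 3 × Fin N)) ((Fin 3 × Fin N) ⊕ (Fin 3 × Fin N)) ℝ)
    (hJ : J = Matrix.fromBlocks 0 1 (-1) 0)
    (Hb Eb : ℝ → (Fin 3 × Fin N → ℝ))
    (hpropb : ∀ t : ℝ,
      Sum.elim (fun i => Real.sqrt μ * Hb t i) (fun i => Real.sqrt ε * Eb t i) =
        (NormedSpace.exp (t • 𝒟)).mulVec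
          (Sum.elim (fun i => Real.sqrt μ * Hb 0 i) (fun i => Real.sqrt ε * Eb 0 i))) :
    (∀ t : ℝ, (NormedSpace.exp (t • 𝒟))ᵀ * J * NormedSpace.exp (t • 𝒟) = J) ∧
    (∀ t : ℝ,
      H t ⬝ᵥ Eb t - E t ⬝ᵥ Hb t = H 0 ⬝ᵥ Eb 0 - E 0 ⬝ᵥ Hb 0) := by
  have h𝔻_symm : 𝔻ᵀ = 𝔻 := h𝔻 ▸ blockMat3_curl_transpose hD1 hD2 hD3
  have h𝒟_skew : 𝒟ᵀ = -𝒟 := by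
    rw [h𝒟, transpose_smul, fromBlocks_zero_neg_transpose h𝔻_symm, smul_neg]
  have hJ𝒟 : Commute J 𝒟 := h𝒟 ▸ hJ ▸ (commute_fromBlocks_zero_one_neg_one 𝔻).smul_right _
  have hflow (t : ℝ) : (NormedSpace.exp (t • 𝒟))ᵀ * J * NormedSpace.exp (t • 𝒟) = J :=
    exp_transpose_mul_mul_exp_of_commute (by rw [transpose_smul, h𝒟_skew, smul_neg])
      (hJ𝒟.smul_right t)
  have hform (h e h' e' : Fin 3 × Fin N → ℝ) :
      Sum.elim (fun i => √μ * h i) (fun i => √ε * e i) ⬝ᵥ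
          J *ᵥ Sum.elim (fun i => √μ * h' i) (fun i => √ε * e' i) =
        √μ * √ε * (h ⬝ᵥ e' - e ⬝ᵥ h') := by
    rw [hJ, sumElim_dotProduct_fromBlocks_zero_one_neg_one_mulVec]
    simp only [dotProduct, Finset.mul_sum, ← Finset.sum_sub_distrib]
    exact Finset.sum_congr rfl fun _ _ => by ring
  refine ⟨hflow, fun t => mul_left_cancel₀ (by positivity : √μ * √ε ≠ 0) ?_⟩
  rw [← hform, ← hform, hprop t, hpropb t, dotProduct_mulVec_mulVec_of_transpose_mul_mul (hflow t)]

/-- the flow `exp(t𝒟)` of the fully discrete exponential scheme is symplectic: `exp(t𝒟)ᵀ J exp(t𝒟) = J`; equivalently, `⟨Hᵗ, Ēᵗ⟩ - ⟨Eᵗ, H̄ᵗ⟩` is constant along any two propagated pairs. -/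
theorem discrete_symplecticity_conservation {N : ℕ} (hN : 0 < N) (μ ε : ℝ) (hμ : 0 < μ) (hε : 0 < ε)
    (D1 D2 D3 : Matrix (Fin N) (Fin N) ℝ)
    (h12 : D1 * D2 = D2 * D1) (h13 : D1 * D3 = D3 * D1) (h23 : D2 * D3 = D3 * D2)
    (hD1 : D1ᵀ = -D1) (hD2 : D2ᵀ = -D2) (hD3 : D3ᵀ = -D3)
    (𝔻 : Matrix (Fin 3 × Fin N) (Fin 3 × Fin N) ℝ)
    (h𝔻 : 𝔻 = blockMat3 ![![0, -D3, D2], ![D3, 0, -D1], ![-D2, D1, 0]])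
    (𝒟 : Matrix ((Fin 3 × Fin N) ⊕ (Fin 3 × Fin N)) ((Fin 3 × Fin N) ⊕ (Fin 3 × Fin N)) ℝ)
    (h𝒟 : 𝒟 = (Real.sqrt (μ * ε))⁻¹ • Matrix.fromBlocks 0 (-𝔻) 𝔻 0)
    (H E : ℝ → (Fin 3 × Fin N → ℝ))
    (hprop : ∀ t : ℝ,
      Sum.elim (fun i => Real.sqrt μ * H t i) (fun i => Real.sqrt ε * E t i) =
        (NormedSpace.exp (t • 𝒟)).mulVec
          (Sum.elim (fun i => Real.sqrt μ * H 0 i) (fun i => Real.sqrt ε * E 0 i)))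
    (J : Matrix ((Fin 3 × Fin N) ⊕ (Fin 3 × Fin N)) ((Fin 3 × Fin N) ⊕ (Fin 3 × Fin N)) ℝ)
    (hJ : J = Matrix.fromBlocks 0 1 (-1) 0)
    (Hb Eb : ℝ → (Fin 3 × Fin N → ℝ))
    (hpropb : ∀ t : ℝ,
      Sum.elim (fun i => Real.sqrt μ * Hb t i) (fun i => Real.sqrt ε * Eb t i) =
        (NormedSpace.exp (t • 𝒟)).mulVec
          (Sum.elim (fun i => Real.sqrt μ * Hb 0 i) (fun i => Real.sqrt ε * Eb 0 i))) :
    (∀ t : ℝ, (NormedSpace.exp (t • 𝒟))ᵀ * J * NormedSpace.exp (t • 𝒟) = J) ∧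
    (∀ t : ℝ,
      H t ⬝ᵥ Eb t - E t ⬝ᵥ Hb t = H 0 ⬝ᵥ Eb 0 - E 0 ⬝ᵥ Hb 0) :=
  discrete_symplecticity_conservation_general μ ε hμ hε D1 D2 D3 hD1 hD2 hD3 𝔻 h𝔻 𝒟 h𝒟 H E hprop J
    hJ Hb Eb hpropb
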